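/- arXiv:1210.7208 — 3 statements merged into one kernel-verified Lean document; each statement's English description precedes it below -/
import Mathlib

section
/- There exists a constant C > 0 such that for all s > 0 and all x > 0, ∫₀^∞ (y/x)² p(s,x,y)² dy ≤ C/√s, where p(s,x,y) = (1/√(4πs)) (exp(−(x−y)²/(4s)) − exp(−(x+y)²/(4s))) is the Dirichlet heat kernel on the half-line. -/
open MeasureTheory Real

noncomputable def heatp (s x y : ℝ) : ℝ :=
  (1 / Real.sqrt (4 * Real.pi * s)) *
    (Real.exp (-(x - y) ^ 2 / (4 * s)) - Real.exp (-(x + y) ^ 2 / (4 * s)))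

/-!
Since `exp (-(x + y)² / 4s) = exp (-(y - x)² / 4s) · exp (-xy / s)`, the kernel is
`(4πs)^{-1/2} exp (-(y - x)² / 4s) (1 - exp (-xy / s))`. The weight `y / x` is tamed by the
second factor: for `y ≤ 2x` it is at most `2`, and for `y > 2x` we use
`1 - exp (-xy / s) ≤ xy / s` and `y ≤ 2 (y - x)`. Hence
`(y / x)² p(s,x,y)² ≤ (4 / πs) G ((y - x) / √s)` with the integrable majorant
`G u = (1 + u²)² exp (-u² / 2)`, and the substitution `u = (y - x) / √s` gives
`C = (4 / π) ∫ G`.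
-/

open Set

lemma heatp_eq_mul_one_sub_exp {s : ℝ} (hs : s ≠ 0) (x y : ℝ) :
    heatp s x y =
      (√(4 * π * s))⁻¹ * exp (-(y - x) ^ 2 / (4 * s)) * (1 - exp (-(x * y / s))) := by
  have hsplit :
      exp (-(x + y) ^ 2 / (4 * s)) = exp (-(y - x) ^ 2 / (4 * s)) * exp (-(x * y / s)) := by
    rw [← exp_add]
    congr 1
    field_simp
    ring
  rw [heatp, hsplit, one_div]
  ring_nf

lemma div_mul_one_sub_exp_neg_le {s x y : ℝ} (hs : 0 < s) (hx : 0 < x) (hy : 0 ≤ y) :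
    y / x * (1 - exp (-(x * y / s))) ≤ 4 * (1 + (y - x) ^ 2 / s) := by
  have hdist : 0 ≤ (y - x) ^ 2 / s := by positivity
  rcases le_or_gt y (2 * x) with hnear | hfar
  · calc y / x * (1 - exp (-(x * y / s))) ≤ 2 * 1 :=
          mul_le_mul ((div_le_iff₀ hx).2 (by linarith)) (by linarith [exp_pos (-(x * y / s))])
            (by linarith [exp_le_one_iff.2 (neg_nonpos.2 (by positivity : 0 ≤ x * y / s))])
            (by norm_num)
      _ ≤ 4 * (1 + (y - x) ^ 2 / s) := by linarith
  · calc y / x * (1 - exp (-(x * y / s))) ≤ y / x * (x * y / s) :=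
          mul_le_mul_of_nonneg_left (by linarith [one_sub_le_exp_neg (x * y / s)]) (by positivity)
      _ = y ^ 2 / s := by field_simp
      _ ≤ 4 * (y - x) ^ 2 / s := by gcongr; nlinarith
      _ ≤ 4 * (1 + (y - x) ^ 2 / s) := by rw [mul_div_assoc]; linarith

noncomputable def gaussMajorant (u : ℝ) : ℝ := (1 + u ^ 2) ^ 2 * exp (-u ^ 2 / 2)

lemma gaussMajorant_nonneg (u : ℝ) : 0 ≤ gaussMajorant u := by
  unfold gaussMajorant; positivity

lemma integrable_pow_mul_exp_neg_mul_sq {b : ℝ} (hb : 0 < b) (n : ℕ) :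
    Integrable fun x : ℝ => x ^ n * exp (-b * x ^ 2) := by
  simpa [rpow_natCast] using
    integrable_rpow_mul_exp_neg_mul_sq hb (s := n) (by linarith [n.cast_nonneg (α := ℝ)])

lemma integrable_gaussMajorant : Integrable gaussMajorant := by
  have h (n : ℕ) : Integrable fun u : ℝ => u ^ n * exp (-(1 / 2) * u ^ 2) :=
    integrable_pow_mul_exp_neg_mul_sq (by norm_num) n
  refine (((h 0).add ((h 2).const_mul 2)).add (h 4)).congr (ae_of_all _ fun u => ?_)
  simp only [gaussMajorant, Pi.add_apply]
  ring_nf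

lemma integral_gaussMajorant_pos : 0 < ∫ u, gaussMajorant u :=
  integral_pos_of_integrable_nonneg_nonzero (x := 0) (by unfold gaussMajorant; fun_prop)
    integrable_gaussMajorant gaussMajorant_nonneg (by simp [gaussMajorant])

lemma sq_div_mul_sq_heatp_le {s x y : ℝ} (hs : 0 < s) (hx : 0 < x) (hy : 0 ≤ y) :
    (y / x) ^ 2 * heatp s x y ^ 2 ≤ 4 / (π * s) * gaussMajorant ((y - x) / √s) := by
  set u := (y - x) / √s
  have hu : (y - x) ^ 2 / s = u ^ 2 := by rw [div_pow, sq_sqrt hs.le]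
  have hexp : exp (-(y - x) ^ 2 / (4 * s)) ^ 2 = exp (-u ^ 2 / 2) := by
    rw [sq, ← exp_add, ← hu]
    congr 1
    ring
  have hkey := div_mul_one_sub_exp_neg_le hs hx hy
  rw [hu] at hkey
  have hfactor : 0 ≤ y / x * (1 - exp (-(x * y / s))) :=
    mul_nonneg (by positivity)
      (by linarith [exp_le_one_iff.2 (neg_nonpos.2 (by positivity : 0 ≤ x * y / s))])
  calc (y / x) ^ 2 * heatp s x y ^ 2
      = (4 * π * s)⁻¹ * exp (-u ^ 2 / 2) * (y / x * (1 - exp (-(x * y / s)))) ^ 2 := by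
        rw [heatp_eq_mul_one_sub_exp hs.ne', mul_pow, mul_pow, inv_pow, sq_sqrt (by positivity),
          hexp]
        ring
    _ ≤ (4 * π * s)⁻¹ * exp (-u ^ 2 / 2) * (4 * (1 + u ^ 2)) ^ 2 := by gcongr
    _ = 4 / (π * s) * gaussMajorant u := by
        rw [gaussMajorant]
        field_simp

lemma integral_comp_sub_div {E : Type*} [NormedAddCommGroup E] [NormedSpace ℝ E] (g : ℝ → E)
    (x a : ℝ) : ∫ y, g ((y - x) / a) = |a| • ∫ u, g u := by
  rw [integral_sub_right_eq_self (fun y => g (y / a)) x, Measure.integral_comp_div]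

theorem ptilde_L2_bound :
    ∃ C > 0, ∀ s > 0, ∀ x > 0,
      ∫ y in Set.Ioi (0:ℝ), (y / x) ^ 2 * (heatp s x y) ^ 2 ≤ C / Real.sqrt s := by
  refine ⟨4 / π * ∫ u, gaussMajorant u,
    mul_pos (by positivity) integral_gaussMajorant_pos, ?_⟩
  intro s hs x hx
  have hrs : 0 < √s := sqrt_pos.2 hs
  have hmaj : Integrable fun y => 4 / (π * s) * gaussMajorant ((y - x) / √s) :=
    ((integrable_gaussMajorant.comp_div hrs.ne').comp_sub_right x).const_mul _
  calc ∫ y in Ioi 0, (y / x) ^ 2 * heatp s x y ^ 2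
      ≤ ∫ y in Ioi 0, 4 / (π * s) * gaussMajorant ((y - x) / √s) :=
        integral_mono_of_nonneg (ae_of_all _ fun y => by positivity) hmaj.integrableOn
          (ae_restrict_of_forall_mem measurableSet_Ioi fun y hy =>
            sq_div_mul_sq_heatp_le hs hx (le_of_lt hy))
    _ ≤ ∫ y, 4 / (π * s) * gaussMajorant ((y - x) / √s) :=
        setIntegral_le_integral hmaj
          (ae_of_all _ fun y => mul_nonneg (by positivity) (gaussMajorant_nonneg _))
    _ = (4 / π * ∫ u, gaussMajorant u) / √s := by
        rw [integral_const_mul, integral_comp_sub_div, abs_of_pos hrs, smul_eq_mul]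
        field_simp
        rw [sq_sqrt hs.le]
end

section
/- Let α > 3/2 and define g(s,y) := p̃(s,0,y) y^{α−1} = C y^{α+1} s^{−3/2} exp(−y²/(4s)) (for a normalizing constant C). Then there exists K > 0 such that for every d ≥ 0 and t ∈ (0,T], ∫₀^t ∫₀^∞ [g(t−s, y+d) − g(t−s, y)]² dy ds ≤ K ∫₀^t d² (t−s)^{α−5/2} ds, and in particular this integral is finite since α − 5/2 > −1. -/
open MeasureTheory Real

noncomputable def ptilde (s x y : ℝ) : ℝ :=
  if x = 0 then y ^ 2 / (s * Real.sqrt (4 * Real.pi * s)) * Real.exp (-y ^ 2 / (4 * s))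
  else (y / x) * heatp s x y

/-! For `y > 0` one has `p̃(τ, 0, y) y^(α-1) = G(y) / (τ √(4πτ))` with
`G(y) = y^(α+1) e^(-y²/(4τ))`. Writing `G(y + d) - G(y) = ∫₀^d G'(y + r) dr`, Cauchy–Schwarz
and Tonelli give `∫₀^∞ (G(y + d) - G(y))² dy ≤ d² ∫₀^∞ G'²`, and Gaussian moment integrals
bound the latter by `C τ^(α+1/2)`. After division by `4πτ³` the inner integral is at most
`C d² τ^(α-5/2) / (4π)`, which is integrable in `τ = t - s` near `0` exactly because
`α - 5/2 > -1`. -/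

open Set

theorem sq_intervalIntegral_le {g : ℝ → ℝ} {a b : ℝ} (hab : a ≤ b)
    (hg : IntervalIntegrable g volume a b)
    (hg2 : IntervalIntegrable (fun x => g x ^ 2) volume a b) :
    (∫ x in a..b, g x) ^ 2 ≤ (b - a) * ∫ x in a..b, g x ^ 2 := by
  rcases hab.eq_or_lt with rfl | hlt
  · simp
  rw [intervalIntegrable_iff_integrableOn_Ioc_of_le hab] at hg hg2
  have jensen := (even_two.convexOn_pow (𝕜 := ℝ)).map_set_average_le
    (continuous_pow 2).continuousOn isClosed_univ (by simp [hlt]) (by simp)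
    (.of_forall fun _ => mem_univ _) hg hg2
  have hba : 0 < b - a := sub_pos.2 hlt
  simp only [setAverage_eq, volume_real_Ioc_of_le hab, smul_eq_mul,
    ← intervalIntegral.integral_of_le hab] at jensen
  field_simp at jensen
  linarith

theorem setLIntegral_Ioi_comp_add_le {F : ℝ → ENNReal} {r : ℝ} (hr : 0 ≤ r) :
    ∫⁻ y in Ioi 0, F (y + r) ≤ ∫⁻ y in Ioi 0, F y := by
  have hpre : (· + r) ⁻¹' Ioi r = Ioi (0:ℝ) := by ext; simp
  calc ∫⁻ y in Ioi 0, F (y + r) = ∫⁻ y in Ioi r, F y := by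
        rw [← hpre, (measurePreserving_add_right volume r).setLIntegral_comp_preimage_emb
          (measurableEmbedding_addRight r)]
    _ ≤ ∫⁻ y in Ioi 0, F y := lintegral_mono_set (Ioi_subset_Ioi hr)

theorem sq_sub_comp_add_le {f f' : ℝ → ℝ} (hf : ∀ x ∈ Ioi (0:ℝ), HasDerivAt f (f' x) x)
    (hf' : Continuous f') {d y : ℝ} (hd : 0 ≤ d) (hy : 0 < y) :
    (f (y + d) - f y) ^ 2 ≤ d * ∫ r in (0:ℝ)..d, f' (y + r) ^ 2 := by
  have hg : Continuous fun r => f' (y + r) := hf'.comp (continuous_const_add y)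
  have hftc : ∫ r in (0:ℝ)..d, f' (y + r) = f (y + d) - f y := by
    have := intervalIntegral.integral_eq_sub_of_hasDerivAt (a := 0) (b := d)
      (f := fun r => f (y + r)) (fun r hr => ?_) (hg.intervalIntegrable _ _)
    · simpa using this
    rw [uIcc_of_le hd] at hr
    exact (hf _ (by simp; linarith [hr.1])).comp_const_add y r
  rw [← hftc]
  simpa using sq_intervalIntegral_le hd (hg.intervalIntegrable _ _)
    ((hg.pow 2).intervalIntegrable _ _)

theorem integral_Ioi_sq_sub_comp_add_le {f f' : ℝ → ℝ}
    (hf : ∀ x ∈ Ioi (0:ℝ), HasDerivAt f (f' x) x) (hf' : Continuous f')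
    (hf'2 : IntegrableOn (fun x => f' x ^ 2) (Ioi 0)) {d : ℝ} (hd : 0 ≤ d) :
    ∫ y in Ioi (0:ℝ), (f (y + d) - f y) ^ 2 ≤ d ^ 2 * ∫ y in Ioi (0:ℝ), f' y ^ 2 := by
  have hrhs : 0 ≤ d ^ 2 * ∫ y in Ioi (0:ℝ), f' y ^ 2 :=
    mul_nonneg (sq_nonneg d) (setIntegral_nonneg measurableSet_Ioi fun _ _ => sq_nonneg _)
  by_cases hint : IntegrableOn (fun y => (f (y + d) - f y) ^ 2) (Ioi 0)
  swap
  · rwa [integral_undef hint]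
  rw [← ENNReal.ofReal_le_ofReal_iff hrhs, ofReal_integral_eq_lintegral_ofReal hint
    (.of_forall fun _ => sq_nonneg _)]
  have hinner : ∀ y, ENNReal.ofReal (∫ r in (0:ℝ)..d, f' (y + r) ^ 2)
      = ∫⁻ r in Ioc 0 d, ENNReal.ofReal (f' (y + r) ^ 2) := fun y => by
    have hg : Continuous fun r => f' (y + r) ^ 2 := by fun_prop
    rw [intervalIntegral.integral_of_le hd, ofReal_integral_eq_lintegral_ofReal
      (hg.integrableOn_Icc.mono_set Ioc_subset_Icc_self) (.of_forall fun _ => sq_nonneg _)]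
  calc ∫⁻ y in Ioi 0, ENNReal.ofReal ((f (y + d) - f y) ^ 2)
      ≤ ∫⁻ y in Ioi 0,
          ENNReal.ofReal d * ∫⁻ r in Ioc 0 d, ENNReal.ofReal (f' (y + r) ^ 2) := by
        refine setLIntegral_mono' measurableSet_Ioi fun y hy => ?_
        rw [← hinner, ← ENNReal.ofReal_mul hd]
        exact ENNReal.ofReal_le_ofReal (sq_sub_comp_add_le hf hf' hd hy)
    _ = ENNReal.ofReal d *
          ∫⁻ r in Ioc 0 d, ∫⁻ y in Ioi 0, ENNReal.ofReal (f' (y + r) ^ 2) := by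
        rw [lintegral_const_mul _ (by fun_prop), lintegral_lintegral_swap (by fun_prop)]
    _ ≤ ENNReal.ofReal d * ∫⁻ r in Ioc 0 d, ∫⁻ y in Ioi 0, ENNReal.ofReal (f' y ^ 2) := by
        gcongr ENNReal.ofReal d * ?_
        exact setLIntegral_mono' measurableSet_Ioc fun r hr =>
          setLIntegral_Ioi_comp_add_le hr.1.le
    _ = ENNReal.ofReal (d ^ 2 * ∫ y in Ioi (0:ℝ), f' y ^ 2) := by
        rw [setLIntegral_const, Real.volume_Ioc, ← ofReal_integral_eq_lintegral_ofReal hf'2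
          (.of_forall fun _ => sq_nonneg _), ENNReal.ofReal_mul (sq_nonneg d),
          sq, ENNReal.ofReal_mul hd, sub_zero]
        ac_rfl

noncomputable def gaussMoment (q : ℝ) : ℝ := 2 ^ ((q + 1) / 2) * Gamma ((q + 1) / 2) / 2

lemma gaussMoment_pos {q : ℝ} (hq : -1 < q) : 0 < gaussMoment q := by
  have := Gamma_pos_of_pos (by linarith : 0 < (q + 1) / 2)
  unfold gaussMoment; positivity

lemma integrableOn_rpow_mul_exp_neg_sq_div {q τ : ℝ} (hq : -1 < q) (hτ : 0 < τ) :
    IntegrableOn (fun y => y ^ q * exp (-y ^ 2 / (2 * τ))) (Ioi 0) := by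
  simpa [neg_div, div_eq_inv_mul] using
    integrableOn_rpow_mul_exp_neg_mul_sq (inv_pos.2 (by positivity : 0 < 2 * τ)) hq

lemma integral_rpow_mul_exp_neg_sq_div {q τ : ℝ} (hq : -1 < q) (hτ : 0 < τ) :
    ∫ y in Ioi 0, y ^ q * exp (-y ^ 2 / (2 * τ)) = gaussMoment q * τ ^ ((q + 1) / 2) := by
  have h := integral_rpow_mul_exp_neg_mul_rpow two_pos hq (inv_pos.2 (by positivity : 0 < 2 * τ))
  simp only [rpow_two, neg_mul, ← neg_div, inv_mul_eq_div] at h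
  rw [h, neg_div, rpow_neg (by positivity), inv_rpow (by positivity), inv_inv,
    mul_rpow zero_le_two hτ.le, gaussMoment]
  ring

noncomputable def powGauss (α τ y : ℝ) : ℝ := y ^ (α + 1) * exp (-y ^ 2 / (4 * τ))

noncomputable def powGaussDeriv (α τ y : ℝ) : ℝ :=
  ((α + 1) * y ^ α - y ^ (α + 2) / (2 * τ)) * exp (-y ^ 2 / (4 * τ))

lemma hasDerivAt_powGauss (α : ℝ) {τ y : ℝ} (hτ : 0 < τ) (hy : 0 < y) :
    HasDerivAt (powGauss α τ) (powGaussDeriv α τ y) y := by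
  have hpow : HasDerivAt (fun y : ℝ => y ^ (α + 1)) ((α + 1) * y ^ α) y := by
    simpa using hasDerivAt_rpow_const (p := α + 1) (Or.inl hy.ne')
  have hexp : HasDerivAt (fun y : ℝ => -y ^ 2 / (4 * τ)) (-(2 * y) / (4 * τ)) y := by
    simpa using ((hasDerivAt_pow 2 y).neg).div_const (4 * τ)
  refine (hpow.mul hexp.exp).congr_deriv ?_
  rw [powGaussDeriv, show y ^ (α + 2) = y ^ (α + 1) * y by
    rw [show α + 2 = (α + 1) + 1 by ring, rpow_add hy, rpow_one]]
  field_simp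
  ring

lemma continuous_powGaussDeriv {α : ℝ} (hα : 0 ≤ α) (τ : ℝ) :
    Continuous (powGaussDeriv α τ) := by
  unfold powGaussDeriv
  have h1 := continuous_rpow_const hα
  have h2 := continuous_rpow_const (by linarith : 0 ≤ α + 2)
  fun_prop

lemma sq_rpow_mul_exp {y : ℝ} (hy : 0 ≤ y) (p τ : ℝ) :
    (y ^ p * exp (-y ^ 2 / (4 * τ))) ^ 2 = y ^ (2 * p) * exp (-y ^ 2 / (2 * τ)) := by
  rw [mul_pow, ← rpow_natCast, ← rpow_mul hy, ← exp_nat_mul]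
  congr 2 <;> push_cast <;> ring

lemma sq_powGaussDeriv_le (α τ : ℝ) {y : ℝ} (hy : 0 ≤ y) :
    powGaussDeriv α τ y ^ 2 ≤ 2 * (α + 1) ^ 2 * (y ^ (2 * α) * exp (-y ^ 2 / (2 * τ)))
      + (2 * τ ^ 2)⁻¹ * (y ^ (2 * α + 4) * exp (-y ^ 2 / (2 * τ))) := by
  have hA := sq_rpow_mul_exp hy α τ
  have hB := sq_rpow_mul_exp hy (α + 2) τ
  rw [show 2 * (α + 2) = 2 * α + 4 by ring] at hB
  set A := y ^ α * exp (-y ^ 2 / (4 * τ))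
  set B := y ^ (α + 2) * exp (-y ^ 2 / (4 * τ))
  rw [← hA, ← hB]
  calc powGaussDeriv α τ y ^ 2 = ((α + 1) * A - B / (2 * τ)) ^ 2 := by
        rw [powGaussDeriv]; ring
    _ ≤ 2 * ((α + 1) * A) ^ 2 + 2 * (B / (2 * τ)) ^ 2 := by
        nlinarith [sq_nonneg ((α + 1) * A + B / (2 * τ))]
    _ = 2 * (α + 1) ^ 2 * A ^ 2 + (2 * τ ^ 2)⁻¹ * B ^ 2 := by ring

noncomputable def incrementConst (α : ℝ) : ℝ :=
  2 * (α + 1) ^ 2 * gaussMoment (2 * α) + gaussMoment (2 * α + 4) / 2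

lemma incrementConst_pos {α : ℝ} (hα : 0 ≤ α) : 0 < incrementConst α := by
  have h1 := gaussMoment_pos (by linarith : -1 < 2 * α)
  have h2 := gaussMoment_pos (by linarith : -1 < 2 * α + 4)
  unfold incrementConst; positivity

lemma integrableOn_sq_powGaussDeriv_majorant {α τ : ℝ} (hα : 0 ≤ α) (hτ : 0 < τ) :
    IntegrableOn (fun y => 2 * (α + 1) ^ 2 * (y ^ (2 * α) * exp (-y ^ 2 / (2 * τ)))
      + (2 * τ ^ 2)⁻¹ * (y ^ (2 * α + 4) * exp (-y ^ 2 / (2 * τ)))) (Ioi 0) :=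
  ((integrableOn_rpow_mul_exp_neg_sq_div (by linarith) hτ).const_mul _).add
    ((integrableOn_rpow_mul_exp_neg_sq_div (by linarith) hτ).const_mul _)

lemma integrableOn_sq_powGaussDeriv {α τ : ℝ} (hα : 0 ≤ α) (hτ : 0 < τ) :
    IntegrableOn (fun y => powGaussDeriv α τ y ^ 2) (Ioi 0) := by
  refine (integrableOn_sq_powGaussDeriv_majorant hα hτ).mono'
    ((continuous_powGaussDeriv hα τ).pow 2).aestronglyMeasurable ?_
  filter_upwards [ae_restrict_mem measurableSet_Ioi] with y hy
  rw [Real.norm_of_nonneg (sq_nonneg _)]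
  exact sq_powGaussDeriv_le α τ (le_of_lt hy)

lemma integral_sq_powGaussDeriv_le {α τ : ℝ} (hα : 0 ≤ α) (hτ : 0 < τ) :
    ∫ y in Ioi 0, powGaussDeriv α τ y ^ 2 ≤ incrementConst α * τ ^ (α + 1 / 2) := by
  calc ∫ y in Ioi 0, powGaussDeriv α τ y ^ 2
      ≤ ∫ y in Ioi 0, (2 * (α + 1) ^ 2 * (y ^ (2 * α) * exp (-y ^ 2 / (2 * τ)))
          + (2 * τ ^ 2)⁻¹ * (y ^ (2 * α + 4) * exp (-y ^ 2 / (2 * τ)))) :=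
        setIntegral_mono_on (integrableOn_sq_powGaussDeriv hα hτ)
          (integrableOn_sq_powGaussDeriv_majorant hα hτ) measurableSet_Ioi
          fun y hy => sq_powGaussDeriv_le α τ (le_of_lt hy)
    _ = incrementConst α * τ ^ (α + 1 / 2) := by
        rw [integral_add ((integrableOn_rpow_mul_exp_neg_sq_div (by linarith) hτ).const_mul _)
          ((integrableOn_rpow_mul_exp_neg_sq_div (by linarith) hτ).const_mul _),
          integral_const_mul, integral_const_mul,
          integral_rpow_mul_exp_neg_sq_div (by linarith) hτ,
          integral_rpow_mul_exp_neg_sq_div (by linarith) hτ,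
          show (2 * α + 4 + 1) / 2 = 2 + (α + 1 / 2) by ring, rpow_add hτ, rpow_two,
          show (2 * α + 1) / 2 = α + 1 / 2 by ring, incrementConst]
        field_simp

lemma integral_sq_sub_powGauss_le {α τ d : ℝ} (hα : 0 ≤ α) (hτ : 0 < τ) (hd : 0 ≤ d) :
    ∫ y in Ioi 0, (powGauss α τ (y + d) - powGauss α τ y) ^ 2
      ≤ incrementConst α * (d ^ 2 * τ ^ (α + 1 / 2)) := by
  calc _ ≤ d ^ 2 * ∫ y in Ioi 0, powGaussDeriv α τ y ^ 2 :=
        integral_Ioi_sq_sub_comp_add_le (fun y hy => hasDerivAt_powGauss α hτ hy)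
          (continuous_powGaussDeriv hα τ) (integrableOn_sq_powGaussDeriv hα hτ) hd
    _ ≤ d ^ 2 * (incrementConst α * τ ^ (α + 1 / 2)) := by
        gcongr; exact integral_sq_powGaussDeriv_le hα hτ
    _ = _ := by ring

lemma ptilde_zero_mul_rpow (α : ℝ) {τ y : ℝ} (hy : 0 < y) :
    ptilde τ 0 y * y ^ (α - 1) = (τ * √(4 * π * τ))⁻¹ * powGauss α τ y := by
  have hpow : y ^ 2 * y ^ (α - 1) = y ^ (α + 1) := by
    rw [← rpow_natCast, ← rpow_add hy]; norm_num; ring_nf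
  rw [ptilde, if_pos rfl, powGauss, ← hpow]
  ring

lemma integral_sq_sub_ptilde_le {α τ d : ℝ} (hα : 0 ≤ α) (hτ : 0 < τ) (hd : 0 ≤ d) :
    ∫ y in Ioi 0, (ptilde τ 0 (y + d) * (y + d) ^ (α - 1) - ptilde τ 0 y * y ^ (α - 1)) ^ 2
      ≤ incrementConst α / (4 * π) * (d ^ 2 * τ ^ (α - 5 / 2)) := by
  have hnorm : ((τ * √(4 * π * τ))⁻¹) ^ 2 = (4 * π * τ ^ 3)⁻¹ := by
    rw [inv_pow, mul_pow, sq_sqrt (by positivity)]; ring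
  have hτpow : τ ^ (α + 1 / 2) = τ ^ 3 * τ ^ (α - 5 / 2) := by
    rw [← rpow_natCast, ← rpow_add hτ]; norm_num; ring_nf
  calc _ = (4 * π * τ ^ 3)⁻¹ *
          ∫ y in Ioi 0, (powGauss α τ (y + d) - powGauss α τ y) ^ 2 := by
        rw [← integral_const_mul]
        refine setIntegral_congr_fun measurableSet_Ioi fun y (hy : 0 < y) => ?_
        rw [ptilde_zero_mul_rpow α (by linarith), ptilde_zero_mul_rpow α hy, ← mul_sub, mul_pow,
          hnorm]
    _ ≤ (4 * π * τ ^ 3)⁻¹ * (incrementConst α * (d ^ 2 * τ ^ (α + 1 / 2))) := by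
        gcongr; exact integral_sq_sub_powGauss_le hα hτ hd
    _ = _ := by
        rw [hτpow]; field_simp

lemma integrableOn_Ioc_sub_rpow {t β : ℝ} (ht : 0 ≤ t) (hβ : -1 < β) :
    IntegrableOn (fun s => (t - s) ^ β) (Ioc 0 t) := by
  rw [← intervalIntegrable_iff_integrableOn_Ioc_of_le ht]
  simpa using
    ((intervalIntegral.intervalIntegrable_rpow' hβ (a := 0) (b := t)).comp_sub_left t).symm

theorem g_increment_bound_general (α : ℝ) (hα : 3/2 < α) (T : ℝ) :
    ∃ K > 0, ∀ d : ℝ, 0 ≤ d → ∀ t ∈ Set.Ioc (0:ℝ) T,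
      (∫ s in Set.Ioc (0:ℝ) t, ∫ y in Set.Ioi (0:ℝ),
          (ptilde (t - s) 0 (y + d) * (y + d) ^ (α - 1) -
            ptilde (t - s) 0 y * y ^ (α - 1)) ^ 2)
        ≤ K * ∫ s in Set.Ioc (0:ℝ) t, d ^ 2 * (t - s) ^ (α - 5/2) ∧
      IntegrableOn (fun s => d ^ 2 * (t - s) ^ (α - 5/2)) (Set.Ioc (0:ℝ) t) := by
  refine ⟨incrementConst α / (4 * π),
    div_pos (incrementConst_pos (by linarith)) (by positivity), fun d hd t ht => ?_⟩
  have hint : IntegrableOn (fun s => d ^ 2 * (t - s) ^ (α - 5/2)) (Ioc 0 t) :=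
    (integrableOn_Ioc_sub_rpow ht.1.le (by linarith)).const_mul _
  refine ⟨?_, hint⟩
  rw [← integral_const_mul, integral_Ioc_eq_integral_Ioo, integral_Ioc_eq_integral_Ioo]
  refine integral_mono_of_nonneg (Filter.Eventually.of_forall fun s =>
      integral_nonneg fun y => sq_nonneg _) ((hint.mono_set Ioo_subset_Ioc_self).const_mul _) ?_
  filter_upwards [ae_restrict_mem measurableSet_Ioo] with s hs
  exact integral_sq_sub_ptilde_le (by linarith) (sub_pos.2 hs.2) hd

theorem g_increment_bound (α : ℝ) (hα : 3/2 < α) (T : ℝ) (hT : 0 < T) :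
    ∃ K > 0, ∀ d : ℝ, 0 ≤ d → ∀ t ∈ Set.Ioc (0:ℝ) T,
      (∫ s in Set.Ioc (0:ℝ) t, ∫ y in Set.Ioi (0:ℝ),
          (ptilde (t - s) 0 (y + d) * (y + d) ^ (α - 1) -
            ptilde (t - s) 0 y * y ^ (α - 1)) ^ 2)
        ≤ K * ∫ s in Set.Ioc (0:ℝ) t, d ^ 2 * (t - s) ^ (α - 5/2) ∧
      IntegrableOn (fun s => d ^ 2 * (t - s) ^ (α - 5/2)) (Set.Ioc (0:ℝ) t) :=
  g_increment_bound_general α hα T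
end

section
/- Suppose (H_n)_{n≥0} are nonnegative measurable functions on [0,T] with H_0 bounded, and there exist constants K > 0 and γ ∈ (0,1) such that H_{n+1}(t) ≤ K ∫₀^t H_n(s) (t−s)^{−γ} ds for all n and all t ∈ [0,T]. Then Σ_n H_n(t) converges uniformly on [0,T], and in particular Σ_n sup_{t∈[0,T]} H_n(t) < ∞. -/
open MeasureTheory Filter

theorem singular_gronwall_picard (T : ℝ) (hT : 0 < T) (H : ℕ → ℝ → ℝ)
    (hnn : ∀ n, ∀ t ∈ Set.Icc (0:ℝ) T, 0 ≤ H n t)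
    (hmeas : ∀ n, Measurable (H n))
    (hbdd : ∃ M : ℝ, ∀ t ∈ Set.Icc (0:ℝ) T, H 0 t ≤ M)
    (K γ : ℝ) (hK : 0 < K) (hγ0 : 0 < γ) (hγ1 : γ < 1)
    (hrec : ∀ n, ∀ t ∈ Set.Icc (0:ℝ) T,
      H (n + 1) t ≤ K * ∫ s in Set.Ioc (0:ℝ) t, H n s * (t - s) ^ (-γ)) :
    (∃ S : ℝ → ℝ, TendstoUniformlyOn
        (fun N t => ∑ n ∈ Finset.range N, H n t) S atTop (Set.Icc 0 T)) ∧
      Summable (fun n => ⨆ t : Set.Icc (0:ℝ) T, H n t.val) := by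
  obtain ⟨M0, hM0⟩ := hbdd
  set M : ℝ := max M0 0 with hMdef
  have hM : 0 ≤ M := le_max_right _ _
  have hH0 : ∀ t ∈ Set.Icc (0:ℝ) T, H 0 t ≤ M := fun t ht => (hM0 t ht).trans (le_max_left _ _)
  have h1γ : (0:ℝ) < 1 - γ := by linarith
  have hrneg : (-1:ℝ) < -γ := by linarith
  -- choose δ
  set δ : ℝ := min T (((1-γ)/(4*K)) ^ (1-γ)⁻¹) with hδdef
  have hδpos : 0 < δ := lt_min hT (Real.rpow_pos_of_pos (by positivity) _)
  have hδT : δ ≤ T := min_le_left _ _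
  have hδsmall : K * δ ^ (1-γ) ≤ (1-γ)/4 := by
    have h1 : δ ^ (1-γ) ≤ (((1-γ)/(4*K)) ^ (1-γ)⁻¹) ^ (1-γ) :=
      Real.rpow_le_rpow hδpos.le (min_le_right _ _) h1γ.le
    rw [Real.rpow_inv_rpow (by positivity) (ne_of_gt h1γ)] at h1
    calc K * δ ^ (1-γ) ≤ K * ((1-γ)/(4*K)) := by nlinarith
      _ = (1-γ)/4 := by field_simp
  -- choose L
  obtain ⟨L, hL0, hLsmall⟩ :
      ∃ L : ℝ, 0 ≤ L ∧ K * (Real.exp (-(L*δ)) * T ^ (1-γ)) ≤ (1-γ)/4 := by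
    have htend : Tendsto (fun L : ℝ => K * (Real.exp (-(L*δ)) * T ^ (1-γ)))
        atTop (nhds (K * (0 * T ^ (1-γ)))) := by
      apply Tendsto.const_mul
      apply Tendsto.mul_const
      apply Real.tendsto_exp_atBot.comp
      apply tendsto_neg_atBot_iff.mpr
      exact Tendsto.atTop_mul_const hδpos tendsto_id
    rw [zero_mul, mul_zero] at htend
    have h2 := htend.eventually (gt_mem_nhds (show (0:ℝ) < (1-γ)/4 by positivity))
    obtain ⟨L, hL⟩ := ((eventually_ge_atTop (0:ℝ)).and h2).exists
    exact ⟨L, hL.1, hL.2.le⟩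
  set C : ℝ := (δ ^ (1-γ) + Real.exp (-(L*δ)) * T ^ (1-γ)) / (1-γ) with hCdef
  have hKC : K * C ≤ 1/2 := by
    rw [hCdef, ← mul_div_assoc, div_le_iff₀ h1γ, mul_add]
    nlinarith
  have hC0 : 0 ≤ C := by positivity
  -- integrability helpers
  have hfI : ∀ t a b : ℝ, IntervalIntegrable (fun s => (t-s) ^ (-γ)) volume a b := by
    intro t a b
    have := (intervalIntegral.intervalIntegrable_rpow'
      (a := t - a) (b := t - b) hrneg).comp_sub_left t
    simpa using this
  have hgI : ∀ t a b : ℝ,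
      IntervalIntegrable (fun s => Real.exp (L*s) * (t-s) ^ (-γ)) volume a b := by
    intro t a b
    exact (hfI t a b).continuousOn_mul
      ((Real.continuous_exp.comp (continuous_const.mul continuous_id)).continuousOn)
  -- rpow integral computation
  have hcomp : ∀ t a b : ℝ, a ≤ b → b ≤ t →
      (∫ s in a..b, (t-s) ^ (-γ)) = ((t-a) ^ (1-γ) - (t-b) ^ (1-γ)) / (1-γ) := by
    intro t a b hab hbt
    rw [intervalIntegral.integral_comp_sub_left (fun x => x ^ (-γ)) t,
      integral_rpow (Or.inl hrneg)]
    rw [show -γ + 1 = 1 - γ by ring]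
  -- key integral estimate
  have hInt : ∀ t : ℝ, 0 < t → t ≤ T →
      (∫ s in Set.Ioc (0:ℝ) t, Real.exp (L*s) * (t-s) ^ (-γ)) ≤ Real.exp (L*t) * C := by
    intro t ht0 htT
    set a : ℝ := max (t - δ) 0 with hadef
    have ha0 : 0 ≤ a := le_max_right _ _
    have hat : a ≤ t := max_le (by linarith) ht0.le
    have hta : t - a ≤ δ := by
      rcases le_total (t - δ) 0 with h | h
      · rw [hadef, max_eq_right h]; linarith
      · rw [hadef, max_eq_left h]; linarith
    rw [← intervalIntegral.integral_of_le ht0.le,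
      ← intervalIntegral.integral_add_adjacent_intervals (hgI t 0 a) (hgI t a t)]
    have piece2 : (∫ s in a..t, Real.exp (L*s) * (t-s) ^ (-γ))
        ≤ Real.exp (L*t) * (δ ^ (1-γ) / (1-γ)) := by
      have hmono : (∫ s in a..t, Real.exp (L*s) * (t-s) ^ (-γ))
          ≤ ∫ s in a..t, Real.exp (L*t) * (t-s) ^ (-γ) := by
        apply intervalIntegral.integral_mono_on hat (hgI t a t)
          ((hfI t a t).continuousOn_mul (continuousOn_const))
        intro s hs
        exact mul_le_mul_of_nonneg_right
          (Real.exp_le_exp.mpr (mul_le_mul_of_nonneg_left hs.2 hL0))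
          (Real.rpow_nonneg (by linarith [hs.2]) _)
      rw [intervalIntegral.integral_const_mul, hcomp t a t hat le_rfl, sub_self,
        Real.zero_rpow (ne_of_gt h1γ), sub_zero] at hmono
      refine hmono.trans ?_
      have h5 : (t-a) ^ (1-γ) ≤ δ ^ (1-γ) := Real.rpow_le_rpow (by linarith) hta h1γ.le
      gcongr
    have piece1 : (∫ s in (0:ℝ)..a, Real.exp (L*s) * (t-s) ^ (-γ))
        ≤ Real.exp (L*t) * (Real.exp (-(L*δ)) * T ^ (1-γ) / (1-γ)) := by
      rcases le_or_gt (t - δ) 0 with h | h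
      · rw [hadef, max_eq_right h, intervalIntegral.integral_same]
        positivity
      · have haeq : a = t - δ := by rw [hadef, max_eq_left h.le]
        have hmono : (∫ s in (0:ℝ)..a, Real.exp (L*s) * (t-s) ^ (-γ))
            ≤ ∫ s in (0:ℝ)..a, Real.exp (L*(t-δ)) * (t-s) ^ (-γ) := by
          apply intervalIntegral.integral_mono_on ha0 (hgI t 0 a)
            ((hfI t 0 a).continuousOn_mul (continuousOn_const))
          intro s hs
          refine mul_le_mul_of_nonneg_right
            (Real.exp_le_exp.mpr (mul_le_mul_of_nonneg_left ?_ hL0))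
            (Real.rpow_nonneg (by linarith [hs.2, hat]) _)
          rw [← haeq]; exact hs.2
        rw [intervalIntegral.integral_const_mul, hcomp t 0 a ha0 hat, sub_zero, haeq,
          sub_sub_cancel] at hmono
        rw [haeq]
        refine hmono.trans ?_
        have he : Real.exp (L*(t-δ)) = Real.exp (L*t) * Real.exp (-(L*δ)) := by
          rw [← Real.exp_add]; ring_nf
        rw [he, mul_assoc, mul_div_assoc]
        have h3 : t ^ (1-γ) ≤ T ^ (1-γ) := Real.rpow_le_rpow ht0.le htT h1γ.le
        have h4 : 0 ≤ δ ^ (1-γ) := Real.rpow_nonneg hδpos.le _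
        gcongr
        linarith
    calc (∫ s in (0:ℝ)..a, Real.exp (L*s) * (t-s) ^ (-γ))
          + ∫ s in a..t, Real.exp (L*s) * (t-s) ^ (-γ)
        ≤ Real.exp (L*t) * (Real.exp (-(L*δ)) * T ^ (1-γ) / (1-γ))
          + Real.exp (L*t) * (δ ^ (1-γ) / (1-γ)) := add_le_add piece1 piece2
      _ = Real.exp (L*t) * C := by rw [hCdef]; ring
  -- main induction
  have key : ∀ n, ∀ t ∈ Set.Icc (0:ℝ) T, H n t ≤ M * (1/2)^n * Real.exp (L*t) := by
    intro n
    induction n with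
    | zero =>
      intro t ht
      have : (1:ℝ) ≤ Real.exp (L*t) := by
        rw [← Real.exp_zero]
        exact Real.exp_le_exp.mpr (mul_nonneg hL0 ht.1)
      calc H 0 t ≤ M := hH0 t ht
        _ = M * (1/2)^0 * 1 := by ring
        _ ≤ M * (1/2)^0 * Real.exp (L*t) := by
            apply mul_le_mul_of_nonneg_left this (by positivity)
    | succ n ih =>
      intro t ht
      rcases eq_or_lt_of_le ht.1 with h0 | h0
      · rw [← h0]
        have h1 := hrec n 0 ⟨le_rfl, hT.le⟩
        rw [Set.Ioc_self, Measure.restrict_empty, integral_zero_measure, mul_zero] at h1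
        exact h1.trans (by positivity)
      · have hIb : IntegrableOn (fun s => Real.exp (L*s) * (t-s) ^ (-γ))
            (Set.Ioc 0 t) volume := by
          have := (hgI t 0 t).1
          simpa using this
        have hcompare :
            (∫ s in Set.Ioc (0:ℝ) t, H n s * (t-s) ^ (-γ))
            ≤ ∫ s in Set.Ioc (0:ℝ) t,
                (M * (1/2)^n) * (Real.exp (L*s) * (t-s) ^ (-γ)) := by
          apply integral_mono_of_nonneg
          · filter_upwards [ae_restrict_mem measurableSet_Ioc] with s hs
            exact mul_nonneg (hnn n s ⟨hs.1.le, hs.2.trans ht.2⟩)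
              (Real.rpow_nonneg (by linarith [hs.2]) _)
          · exact hIb.const_mul _
          · filter_upwards [ae_restrict_mem measurableSet_Ioc] with s hs
            rw [← mul_assoc]
            exact mul_le_mul_of_nonneg_right (ih s ⟨hs.1.le, hs.2.trans ht.2⟩)
              (Real.rpow_nonneg (by linarith [hs.2]) _)
        rw [integral_const_mul] at hcompare
        calc H (n+1) t ≤ K * ∫ s in Set.Ioc (0:ℝ) t, H n s * (t-s) ^ (-γ) :=
              hrec n t ht
          _ ≤ K * ((M * (1/2)^n) * ∫ s in Set.Ioc (0:ℝ) t,
                Real.exp (L*s) * (t-s) ^ (-γ)) :=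
              mul_le_mul_of_nonneg_left hcompare hK.le
          _ ≤ K * ((M * (1/2)^n) * (Real.exp (L*t) * C)) := by
              apply mul_le_mul_of_nonneg_left _ hK.le
              exact mul_le_mul_of_nonneg_left (hInt t h0 ht.2) (by positivity)
          _ = (M * (1/2)^n * Real.exp (L*t)) * (K * C) := by ring
          _ ≤ (M * (1/2)^n * Real.exp (L*t)) * (1/2) :=
              mul_le_mul_of_nonneg_left hKC (by positivity)
          _ = M * (1/2)^(n+1) * Real.exp (L*t) := by ring
  -- summable bound
  set B : ℕ → ℝ := fun n => M * Real.exp (L*T) * (1/2)^n with hBdef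
  have hB : ∀ n, ∀ t ∈ Set.Icc (0:ℝ) T, H n t ≤ B n := by
    intro n t ht
    refine (key n t ht).trans ?_
    rw [hBdef]
    have : Real.exp (L*t) ≤ Real.exp (L*T) :=
      Real.exp_le_exp.mpr (mul_le_mul_of_nonneg_left ht.2 hL0)
    calc M * (1/2)^n * Real.exp (L*t) ≤ M * (1/2)^n * Real.exp (L*T) :=
        mul_le_mul_of_nonneg_left this (by positivity)
      _ = M * Real.exp (L*T) * (1/2)^n := by ring
  have hBsum : Summable B :=
    (summable_geometric_of_lt_one (by norm_num) (by norm_num)).mul_left _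
  have hB0 : ∀ n, 0 ≤ B n := fun n => by rw [hBdef]; positivity
  haveI : Nonempty (Set.Icc (0:ℝ) T) := (Set.nonempty_Icc.mpr hT.le).to_subtype
  constructor
  · refine ⟨fun t => ∑' n, H n t, tendstoUniformlyOn_tsum_nat hBsum ?_⟩
    intro n t ht
    rw [Real.norm_eq_abs, abs_of_nonneg (hnn n t ht)]
    exact hB n t ht
  · apply Summable.of_nonneg_of_le _ _ hBsum
    · intro n
      have hba : BddAbove (Set.range fun t : Set.Icc (0:ℝ) T => H n t.val) := by
        refine ⟨B n, ?_⟩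
        rintro x ⟨t, rfl⟩
        exact hB n t.val t.2
      refine le_trans (hnn n 0 ⟨le_rfl, hT.le⟩) (le_ciSup hba ⟨0, le_rfl, hT.le⟩)
    · intro n
      exact ciSup_le fun t => hB n t.val t.2
end
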